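/- Let X be a Hausdorff locally convex topological vector space, V ⊆ X a closed set, and U ⊆ V a set dense in V such that for all u, v ∈ U the set [u,v] ∩ U is dense in [u,v]. Then V is convex (hence U is self-segment-dense in V). -/

import Mathlib

open Set

theorem convex_closure_of_segment_subset_closure {𝕜 E : Type*} [Semiring 𝕜] [PartialOrder 𝕜]
    [AddCommMonoid E] [Module 𝕜 E] [TopologicalSpace E] [ContinuousAdd E]
    [ContinuousConstSMul 𝕜 E] {s : Set E} (h : ∀ x ∈ s, ∀ y ∈ s, segment 𝕜 x y ⊆ closure s) :
    Convex 𝕜 (closure s) := by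
  intro x hx y hy a b ha hb hab
  have hcombo : Continuous fun p : E × E => a • p.1 + b • p.2 :=
    (continuous_fst.const_smul a).add (continuous_snd.const_smul b)
  have hmem : a • x + b • y ∈ closure (closure s) :=
    map_mem_closure₂ (f := fun x' y' => a • x' + b • y') hcombo hx hy
      fun x' hx' y' hy' => h x' hx' y' hy' ⟨a, b, ha, hb, hab, rfl⟩
  rwa [closure_closure] at hmem

theorem convex_of_closed_of_segment_dense_general
    {X : Type*} [AddCommGroup X] [Module ℝ X] [TopologicalSpace X]
    [IsTopologicalAddGroup X] [ContinuousSMul ℝ X]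
    (V U : Set X) (hVcl : IsClosed V) (hUV : U ⊆ V) (hdense : V ⊆ closure U)
    (hssd : ∀ u ∈ U, ∀ v ∈ U, segment ℝ u v ⊆ closure (segment ℝ u v ∩ U)) :
    Convex ℝ V := by
  have hV : V = closure U := hdense.antisymm (closure_minimal hUV hVcl)
  rw [hV]
  exact convex_closure_of_segment_subset_closure fun u hu v hv =>
    (hssd u hu v hv).trans (closure_mono inter_subset_right)

/-- Lemma 2.6: if `V` is closed, `U ⊆ V` is dense in `V`, and for all `u, v ∈ U` the
set `[u,v] ∩ U` is dense in `[u,v]`, then `V` is convex (hence `U` is actually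
self-segment-dense in `V`). -/
theorem convex_of_closed_of_segment_dense
    {X : Type*} [AddCommGroup X] [Module ℝ X] [TopologicalSpace X]
    [IsTopologicalAddGroup X] [ContinuousSMul ℝ X] [LocallyConvexSpace ℝ X] [T2Space X]
    (V U : Set X) (hVcl : IsClosed V) (hUV : U ⊆ V) (hdense : V ⊆ closure U)
    (hssd : ∀ u ∈ U, ∀ v ∈ U, segment ℝ u v ⊆ closure (segment ℝ u v ∩ U)) :
    Convex ℝ V :=
  convex_of_closed_of_segment_dense_general V U hVcl hUV hdense hssd
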